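/- For nonzero vectors a, b in an inner product space, 1 − ⟨a,b⟩/(‖a‖‖b‖) ≤ ‖a − b‖²/(2·min(‖a‖², ‖b‖²)). -/

import Mathlib

open RealInnerProductSpace

/-- Cosine distance is controlled by the normalized squared Euclidean
distance: for nonzero `a, b`,
`1 − ⟪a,b⟫/(‖a‖‖b‖) ≤ ‖a − b‖²/(2·min (‖a‖², ‖b‖²))`. -/
theorem cosine_distance_le {E : Type*} [NormedAddCommGroup E]
    [InnerProductSpace ℝ E] (a b : E) (ha : a ≠ 0) (hb : b ≠ 0) :
    1 - ⟪a, b⟫ / (‖a‖ * ‖b‖) ≤ ‖a - b‖ ^ 2 / (2 * min (‖a‖ ^ 2) (‖b‖ ^ 2)) := by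
  have ha' : (0:ℝ) < ‖a‖ := norm_pos_iff.mpr ha
  have hb' : (0:ℝ) < ‖b‖ := norm_pos_iff.mpr hb
  have hip : ⟪a, b⟫ ≤ ‖a‖ * ‖b‖ := real_inner_le_norm a b
  have hsub : ‖a - b‖ ^ 2 = ‖a‖ ^ 2 - 2 * ⟪a, b⟫ + ‖b‖ ^ 2 := by
    rw [norm_sub_sq_real]
  rcases le_total ‖a‖ ‖b‖ with h | h
  · rw [min_eq_left (pow_le_pow_left₀ ha'.le h 2)]
    rw [le_div_iff₀ (by positivity)]
    rw [hsub]
    have key : (1 - ⟪a, b⟫ / (‖a‖ * ‖b‖)) * (2 * ‖a‖ ^ 2)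
        = 2 * ‖a‖ ^ 2 - 2 * ⟪a, b⟫ * (‖a‖ / ‖b‖) := by
      field_simp
    rw [key]
    have hd : ‖a‖ / ‖b‖ ≤ 1 := (div_le_one hb').mpr h
    have hd0 : 0 < ‖a‖ / ‖b‖ := by positivity
    have ht2 : ‖a‖ / ‖b‖ * ‖b‖ * ‖a‖ = ‖a‖ ^ 2 := by field_simp
    nlinarith [sq_nonneg (‖a‖ - ‖b‖), mul_le_mul_of_nonneg_right hip (sub_nonneg.mpr hd), ht2]
  · rw [min_eq_right (pow_le_pow_left₀ hb'.le h 2)]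
    rw [le_div_iff₀ (by positivity)]
    rw [hsub]
    have key : (1 - ⟪a, b⟫ / (‖a‖ * ‖b‖)) * (2 * ‖b‖ ^ 2)
        = 2 * ‖b‖ ^ 2 - 2 * ⟪a, b⟫ * (‖b‖ / ‖a‖) := by
      field_simp
    rw [key]
    have hd : ‖b‖ / ‖a‖ ≤ 1 := (div_le_one ha').mpr h
    have hd0 : 0 < ‖b‖ / ‖a‖ := by positivity
    have ht2 : ‖b‖ / ‖a‖ * ‖a‖ * ‖b‖ = ‖b‖ ^ 2 := by field_simp
    nlinarith [sq_nonneg (‖a‖ - ‖b‖), mul_le_mul_of_nonneg_right hip (sub_nonneg.mpr hd), ht2]
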